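/- arXiv:1103.5151 — 2 statements merged into one kernel-verified Lean document; each statement's English description precedes it below -/
import Mathlib

section
/- Let F be free on a totally ordered set X, and let c₁ ≥ c₂ ≥ 1 and n ≥ 1 satisfy n − 1 ≤ 2c₂ − c₁. If β and α are basic commutators on X with β > α, c₁+1 ≤ wt(β) ≤ c₁+n, and c₂+1 ≤ wt(α) ≤ c₂+n, then [β,α] is a basic commutator on X. -/
/-- Formal commutators (bracket words) on a set `X` of generators. -/
inductive FormalComm (X : Type) : Type
  | of : X → FormalComm X
  | comm : FormalComm X → FormalComm X → FormalComm X

namespace FormalComm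

/-- The weight of a formal commutator. -/
def weight {X : Type} : FormalComm X → ℕ
  | of _ => 1
  | comm b a => weight b + weight a

/-- Basic commutators with respect to a strict order `r` on formal commutators:
generators are basic of weight 1; `[b,a]` is basic if `b`, `a` are basic, `a < b`,
and whenever `b = [b₁,b₂]` one has `b₂ ≤ a`. -/
inductive IsBasic {X : Type} (r : FormalComm X → FormalComm X → Prop) : FormalComm X → Prop
  | of (x : X) : IsBasic r (.of x)
  | comm (b a : FormalComm X) : IsBasic r b → IsBasic r a → r a b →
      (∀ b₁ b₂, b = .comm b₁ b₂ → ¬ r a b₂) → IsBasic r (.comm b a)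

open scoped commutatorElement in
/-- Evaluation of a formal commutator in the free group on `X`. -/
def eval {X : Type} : FormalComm X → FreeGroup X
  | of x => FreeGroup.of x
  | comm b a => ⁅eval b, eval a⁆

end FormalComm

/-- The Witt number `χ_n(d) = (1/n) ∑_{m ∣ n} μ(m) d^{n/m}`. -/
def witt (n d : ℕ) : ℕ :=
  ((∑ m ∈ n.divisors, ArithmeticFunction.moebius m * (d : ℤ) ^ (n / m)) / (n : ℤ)).toNat

/-!
If `β = [β₁, β₂]` is basic then `β₂ < β₁`, so `wt β₂ ≤ wt β / 2`. The weight bounds give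
`wt β ≤ c₁ + n ≤ 2c₂ + 1 < 2 wt α`, hence `wt β₂ < wt α`, so `β₂ < α` because the order
refines weight. This is exactly the extra condition making `[β, α]` basic.
-/

namespace FormalComm

variable {X : Type} {r : FormalComm X → FormalComm X → Prop}

theorem weight_comm (b a : FormalComm X) : (comm b a).weight = b.weight + a.weight := rfl

theorem weight_le_of_rel [Std.Asymm r] (hwt : ∀ a b : FormalComm X, a.weight < b.weight → r a b)
    {a b : FormalComm X} (h : r a b) : a.weight ≤ b.weight :=
  not_lt.mp fun hlt => asymm h (hwt b a hlt)

theorem IsBasic.rel_of_comm {b₁ b₂ : FormalComm X} (h : IsBasic r (FormalComm.comm b₁ b₂)) :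
    r b₂ b₁ := by
  cases h with
  | comm _ _ _ _ hlt _ => exact hlt

theorem IsBasic.two_mul_weight_right_le [Std.Asymm r]
    (hwt : ∀ a b : FormalComm X, a.weight < b.weight → r a b)
    {b₁ b₂ : FormalComm X} (h : IsBasic r (FormalComm.comm b₁ b₂)) :
    2 * b₂.weight ≤ (FormalComm.comm b₁ b₂).weight := by
  have := weight_le_of_rel hwt h.rel_of_comm
  rw [weight_comm]
  omega

theorem IsBasic.comm_of_weight_lt_two_mul [Std.Asymm r]
    (hwt : ∀ a b : FormalComm X, a.weight < b.weight → r a b)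
    {β α : FormalComm X} (hβ : IsBasic r β) (hα : IsBasic r α) (hαβ : r α β)
    (hweight : β.weight < 2 * α.weight) : IsBasic r (FormalComm.comm β α) := by
  refine .comm β α hβ hα hαβ ?_
  rintro b₁ b₂ rfl hαb₂
  have := hβ.two_mul_weight_right_le hwt
  exact asymm hαb₂ (hwt b₂ α (by omega))

end FormalComm

theorem comm_isBasic_of_weights_general {X : Type}
    (r : FormalComm X → FormalComm X → Prop)
    (hr : IsStrictTotalOrder (FormalComm X) r)
    (hwt : ∀ a b : FormalComm X, a.weight < b.weight → r a b)
    (c₁ c₂ n : ℕ)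
    (hineq : n + c₁ ≤ 2 * c₂ + 1)
    (β α : FormalComm X) (hβ : FormalComm.IsBasic r β) (hα : FormalComm.IsBasic r α)
    (hab : r α β)
    (hβhi : β.weight ≤ c₁ + n)
    (hαlo : c₂ + 1 ≤ α.weight) :
    FormalComm.IsBasic r (.comm β α) := by
  have := hr
  exact hβ.comm_of_weight_lt_two_mul hwt hα hab (by omega)

/-- Lemma 2.1: if `n - 1 ≤ 2c₂ - c₁` (stated as `n + c₁ ≤ 2c₂ + 1`), `c₁ ≥ c₂ ≥ 1`, and
`β > α` are basic commutators with `c₁+1 ≤ wt(β) ≤ c₁+n` and `c₂+1 ≤ wt(α) ≤ c₂+n`,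
then `[β,α]` is a basic commutator. -/
theorem comm_isBasic_of_weights {X : Type}
    (r : FormalComm X → FormalComm X → Prop)
    (hr : IsStrictTotalOrder (FormalComm X) r)
    (hwt : ∀ a b : FormalComm X, a.weight < b.weight → r a b)
    (c₁ c₂ n : ℕ) (hc : c₂ ≤ c₁) (hc₂ : 1 ≤ c₂) (hn : 1 ≤ n)
    (hineq : n + c₁ ≤ 2 * c₂ + 1)
    (β α : FormalComm X) (hβ : FormalComm.IsBasic r β) (hα : FormalComm.IsBasic r α)
    (hab : r α β)
    (hβlo : c₁ + 1 ≤ β.weight) (hβhi : β.weight ≤ c₁ + n)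
    (hαlo : c₂ + 1 ≤ α.weight) (hαhi : α.weight ≤ c₂ + n) :
    FormalComm.IsBasic r (.comm β α) :=
  comm_isBasic_of_weights_general r hr hwt c₁ c₂ n hineq β α hβ hα hab hβhi hαlo
end

section
/- If c₁ ≥ c₂ and c₂+n < c₁+1, then |A − C| = (Σ_{i=c₁+1}^{c₁+n} χ_i(m)) · (Σ_{i=c₂+1}^{c₂+n} χ_i(m)); and if c₂+n ≥ c₁+1, then |A − C| = (Σ_{i=c₁+1}^{c₁+n} χ_i(m))·(Σ_{i=c₂+1}^{c₁} χ_i(m)) + χ₂(Σ_{i=c₁+1}^{c₂+n} χ_i(m)). -/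
/-!
Hall's collection process rewrites a word in the generators, read as a list of letters, into a
nondecreasing list of basic commutators with the same foliage. The process is confluent, so this
list is unique, and multisets of basic commutators of total weight `n` correspond to the `m ^ n`
words of length `n`: `∏_d (1 - t ^ d) ^ (-H_d) = (1 - m t)⁻¹`, where `H_d` counts the basic
commutators of weight `d`. Its logarithmic derivative, obtained by counting pairs of a multiset
and one of its elements, is `∑_{d ∣ n} d H_d = m ^ n`, and Möbius inversion gives `H_d = χ_d(m)`.
Finally, `A \ C` consists of the basic `[β, α]` whose weights satisfy explicit bounds. These split
into a product of two weight ranges in which `α` is automatically lighter than `β`, plus, when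
`c₁ + 1 ≤ c₂ + n`, the pairs `α < β` drawn from the single range `[c₁ + 1, c₂ + n]`, counted by
`χ₂`.
-/

open Finset Relation

section WeightedMultisets

variable {α : Type*} (w : α → ℕ) (B : Set α)

def multisetsOfWeight (n : ℕ) : Set (Multiset α) :=
  {M | (∀ a ∈ M, a ∈ B) ∧ (M.map w).sum = n}

variable {w B}

lemma card_le_sum_map_of_pos (hw : ∀ a, 0 < w a) (M : Multiset α) :
    Multiset.card M ≤ (M.map w).sum := by
  simpa using Multiset.card_nsmul_le_sum (s := M.map w) (a := 1)
    (by simpa [Nat.one_le_iff_ne_zero, ← Nat.pos_iff_ne_zero] using fun a _ => hw a)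

lemma finite_multisetsOfWeight (hw : ∀ a, 0 < w a) (hfin : ∀ n, {a ∈ B | w a ≤ n}.Finite)
    (n : ℕ) : (multisetsOfWeight w B n).Finite := by
  classical
  refine (Multiset.powerset (n • (hfin n).toFinset.val)).toFinset.finite_toSet.subset ?_
  rintro M ⟨hB, hsum⟩
  simp only [Finset.mem_coe, Multiset.mem_toFinset, Multiset.mem_powerset, Multiset.le_iff_count]
  intro a
  by_cases ha : a ∈ M
  · have haU : a ∈ (hfin n).toFinset := by
      simpa using ⟨hB a ha, hsum ▸ Multiset.le_sum_of_mem (Multiset.mem_map_of_mem w ha)⟩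
    rw [Multiset.count_nsmul, Multiset.count_eq_one_of_mem (nodup _) haU, mul_one]
    exact (M.count_le_card a).trans (hsum ▸ card_le_sum_map_of_pos hw M)
  · simp [Multiset.count_eq_zero_of_notMem ha]

lemma sum_map_add_replicate (M : Multiset α) (k : ℕ) (a : α) :
    ((M + Multiset.replicate k a).map w).sum = (M.map w).sum + k * w a := by
  simp

lemma ncard_setOf_le_count [DecidableEq α] {a : α} (ha : a ∈ B) (n k : ℕ) :
    {M ∈ multisetsOfWeight w B n | k ≤ M.count a}.ncard =
      if k * w a ≤ n then (multisetsOfWeight w B (n - k * w a)).ncard else 0 := by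
  split_ifs with hk
  · rw [← Set.ncard_image_of_injective (multisetsOfWeight w B (n - k * w a))
      (add_left_injective (Multiset.replicate k a))]
    congr 1
    ext M
    constructor
    · rintro ⟨⟨hB, hsum⟩, hcount⟩
      have hM := tsub_add_cancel_of_le (Multiset.le_count_iff_replicate_le.mp hcount)
      refine ⟨M - Multiset.replicate k a,
        ⟨fun b hb => hB b (Multiset.mem_of_le tsub_le_self hb), ?_⟩, hM⟩
      have := sum_map_add_replicate (w := w) (M - Multiset.replicate k a) k a
      rw [hM] at this
      omega
    · rintro ⟨N, ⟨hB, hsum⟩, rfl⟩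
      refine ⟨⟨fun b hb => ?_, by rw [sum_map_add_replicate]; omega⟩, by simp⟩
      rcases Multiset.mem_add.mp hb with hb | hb
      exacts [hB b hb, Multiset.eq_of_mem_replicate hb ▸ ha]
  · convert Set.ncard_empty (Multiset α)
    refine Set.eq_empty_of_forall_notMem ?_
    rintro M ⟨⟨-, hsum⟩, hcount⟩
    have := sum_map_add_replicate (w := w) (M - Multiset.replicate k a) k a
    rw [tsub_add_cancel_of_le (Multiset.le_count_iff_replicate_le.mp hcount)] at this
    omega

lemma sum_count_eq_sum_ncard [DecidableEq α] (hw : ∀ a, 0 < w a)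
    (hfin : ∀ n, {a ∈ B | w a ≤ n}.Finite) {a : α} (ha : a ∈ B) (n : ℕ) :
    ∑ M ∈ (finite_multisetsOfWeight hw hfin n).toFinset, M.count a =
      ∑ e ∈ Icc 1 n with w a ∣ e, (multisetsOfWeight w B (n - e)).ncard := by
  set S := (finite_multisetsOfWeight hw hfin n).toFinset
  have hcount : ∀ M ∈ S, M.count a = #{k ∈ Icc 1 n | k ≤ M.count a} := by
    intro M hM
    obtain ⟨-, hsum⟩ := (Set.Finite.mem_toFinset _).mp hM
    have : M.count a ≤ n := (M.count_le_card a).trans (hsum ▸ card_le_sum_map_of_pos hw M)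
    rw [show {k ∈ Icc 1 n | k ≤ M.count a} = Icc 1 (M.count a) by
      ext k
      simp only [mem_filter, mem_Icc]
      omega]
    simp
  have hlayer : ∀ k, #{M ∈ S | k ≤ M.count a} =
      if k * w a ≤ n then (multisetsOfWeight w B (n - k * w a)).ncard else 0 := by
    intro k
    rw [← ncard_setOf_le_count ha, ← Set.ncard_coe_finset]
    congr 1
    ext M
    simp [S]
  have hwa := hw a
  calc ∑ M ∈ S, M.count a = ∑ M ∈ S, #{k ∈ Icc 1 n | k ≤ M.count a} := sum_congr rfl hcount
    _ = ∑ k ∈ Icc 1 n, #{M ∈ S | k ≤ M.count a} := by simp only [card_filter]; exact sum_comm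
    _ = ∑ k ∈ Icc 1 n with k * w a ≤ n, (multisetsOfWeight w B (n - k * w a)).ncard := by
      rw [sum_filter]
      exact sum_congr rfl fun k _ => hlayer k
    _ = _ := by
      refine sum_nbij' (· * w a) (· / w a) ?_ ?_ ?_ ?_ fun _ _ => rfl
      · simp only [mem_filter, mem_Icc]
        intro k hk
        exact ⟨⟨Nat.mul_pos hk.1.1 hwa, hk.2⟩, dvd_mul_left _ _⟩
      · simp only [mem_filter, mem_Icc]
        rintro e ⟨⟨he1, hen⟩, hdvd⟩
        have := Nat.le_of_dvd he1 hdvd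
        refine ⟨⟨(Nat.one_le_div_iff hwa).mpr this, (Nat.div_le_self e _).trans hen⟩, ?_⟩
        rwa [Nat.div_mul_cancel hdvd]
      · intro k _
        exact Nat.mul_div_cancel k hwa
      · intro e he
        exact Nat.div_mul_cancel (mem_filter.mp he).2

lemma sum_weight_filter_dvd (hfin : ∀ n, {a ∈ B | w a ≤ n}.Finite) {n e : ℕ} (he : e ≤ n)
    (he0 : e ≠ 0) :
    ∑ a ∈ (hfin n).toFinset with w a ∣ e, w a = ∑ d ∈ e.divisors, d * {a ∈ B | w a = d}.ncard := by
  classical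
  rw [← sum_fiberwise_of_maps_to (g := w) (t := e.divisors) fun a ha =>
    Nat.mem_divisors.mpr ⟨(mem_filter.mp ha).2, he0⟩]
  refine sum_congr rfl fun d hd => ?_
  rw [sum_congr rfl fun a ha => (mem_filter.mp ha).2, sum_const, smul_eq_mul, mul_comm,
    ← Set.ncard_coe_finset]
  congr 2
  ext a
  have := Nat.divisor_le hd
  simp only [coe_filter, mem_filter, Set.Finite.mem_toFinset, Set.mem_ofPred_eq]
  constructor
  · rintro ⟨⟨⟨haB, -⟩, -⟩, rfl⟩
    exact ⟨haB, rfl⟩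
  · rintro ⟨haB, rfl⟩
    exact ⟨⟨⟨haB, by omega⟩, Nat.dvd_of_mem_divisors hd⟩, rfl⟩

theorem mul_ncard_multisetsOfWeight (hw : ∀ a, 0 < w a) (hfin : ∀ n, {a ∈ B | w a ≤ n}.Finite)
    (n : ℕ) :
    n * (multisetsOfWeight w B n).ncard = ∑ e ∈ Icc 1 n,
      (∑ d ∈ e.divisors, d * {a ∈ B | w a = d}.ncard) * (multisetsOfWeight w B (n - e)).ncard := by
  classical
  set S := (finite_multisetsOfWeight hw hfin n).toFinset
  set U := (hfin n).toFinset
  have hsum : ∀ M ∈ S, n = ∑ a ∈ U, M.count a * w a := by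
    intro M hM
    obtain ⟨hB, hsum⟩ := (Set.Finite.mem_toFinset _).mp hM
    rw [← hsum, sum_multiset_map_count]
    refine sum_subset (fun a ha => ?_) (fun a _ ha => ?_)
    · rw [Multiset.mem_toFinset] at ha
      simpa [U] using ⟨hB a ha, hsum ▸ Multiset.le_sum_of_mem (Multiset.mem_map_of_mem w ha)⟩
    · simp [Multiset.count_eq_zero_of_notMem (Multiset.mem_toFinset.not.mp ha)]
  calc n * (multisetsOfWeight w B n).ncard = ∑ M ∈ S, n := by
        rw [Set.ncard_eq_toFinset_card _ (finite_multisetsOfWeight hw hfin n), sum_const,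
          smul_eq_mul, mul_comm]
    _ = ∑ a ∈ U, (∑ M ∈ S, M.count a) * w a := by
        rw [sum_congr rfl hsum, sum_comm]
        simp only [sum_mul]
    _ = ∑ a ∈ U, ∑ e ∈ Icc 1 n,
          if w a ∣ e then w a * (multisetsOfWeight w B (n - e)).ncard else 0 := by
        refine sum_congr rfl fun a ha => ?_
        rw [sum_count_eq_sum_ncard hw hfin ((Set.Finite.mem_toFinset _).mp ha).1, sum_mul,
          sum_filter]
        exact sum_congr rfl fun e _ => by split_ifs <;> ring
    _ = _ := by
        rw [sum_comm]
        refine sum_congr rfl fun e he => ?_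
        rw [mem_Icc] at he
        rw [← sum_weight_filter_dvd hfin he.2 (by omega), sum_mul, sum_filter]

end WeightedMultisets

lemma eq_pow_of_mul_pow_eq_sum {q : ℕ} {c : ℕ → ℕ}
    (h : ∀ n, n * q ^ n = ∑ e ∈ Icc 1 n, c e * q ^ (n - e)) {n : ℕ} (hn : 1 ≤ n) :
    c n = q ^ n := by
  induction n using Nat.strong_induction_on with
  | _ n ih =>
    obtain ⟨k, rfl⟩ : ∃ k, n = k + 1 := ⟨n - 1, by omega⟩
    have hlower : ∑ e ∈ Icc 1 k, c e * q ^ (k + 1 - e) = ∑ e ∈ Icc 1 k, q ^ (k + 1) :=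
      sum_congr rfl fun e he => by
        rw [mem_Icc] at he
        rw [ih e (by omega) he.1, ← pow_add, Nat.add_sub_cancel' (by omega)]
    have := h (k + 1)
    rw [sum_Icc_succ_top (by omega), hlower, sum_const, Nat.card_Icc, smul_eq_mul,
      Nat.add_sub_cancel, Nat.sub_self, pow_zero, mul_one, add_mul, one_mul] at this
    omega

lemma eq_witt_of_sum_divisors_mul_eq_pow {q : ℕ} {h : ℕ → ℕ}
    (hsum : ∀ n, 0 < n → ∑ d ∈ n.divisors, d * h d = q ^ n) {d : ℕ} (hd : 0 < d) :
    h d = witt d q := by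
  have key : ∀ n > 0, ∑ i ∈ n.divisors, ((i * h i : ℕ) : ℤ) = (q : ℤ) ^ n := fun n hn => by
    exact_mod_cast hsum n hn
  have inv := (ArithmeticFunction.sum_eq_iff_sum_smul_moebius_eq (R := ℤ)).mp key d hd
  rw [Nat.sum_divisorsAntidiagonal
    (f := fun i j => (ArithmeticFunction.moebius i : ℤ) • (q : ℤ) ^ j)] at inv
  have hmoebius : ∑ i ∈ d.divisors, ArithmeticFunction.moebius i * (q : ℤ) ^ (d / i) =
      (d : ℤ) * h d := by
    exact_mod_cast inv
  rw [witt, hmoebius, Int.mul_ediv_cancel_left _ (by omega), Int.toNat_natCast]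

lemma witt_two (q : ℕ) : witt 2 q = q.choose 2 := by
  have hdiv : Nat.divisors 2 = {1, 2} := by decide
  have hsub : (q : ℤ) ^ 2 - q = ((q * (q - 1) : ℕ) : ℤ) := by
    rcases Nat.eq_zero_or_pos q with rfl | hq
    · simp
    · push_cast [Nat.cast_sub hq]
      ring
  rw [witt, hdiv, Finset.sum_pair (by decide), ArithmeticFunction.moebius_apply_one,
    ArithmeticFunction.moebius_apply_prime Nat.prime_two, Nat.choose_two_right]
  norm_num
  rw [← sub_eq_add_neg, hsub]
  omega

lemma ncard_setOf_snd_lt_fst {β : Type*} [LinearOrder β] {S : Set β} (hS : S.Finite) :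
    {q ∈ S ×ˢ S | q.2 < q.1}.ncard = S.ncard.choose 2 := by
  classical
  have hswap : {q ∈ S ×ˢ S | q.2 < q.1} =
      Prod.swap '' ↑{x ∈ hS.toFinset ×ˢ hS.toFinset | x.1 < x.2} := by
    ext ⟨a, b⟩
    simp only [Set.mem_prod, Set.mem_ofPred_eq, Finset.coe_filter, Finset.mem_product,
      Set.Finite.mem_toFinset, Set.mem_image, Prod.exists, Prod.swap_prod_mk, Prod.mk.injEq,
      ↓existsAndEq, true_and, exists_eq_right]
    tauto
  rw [hswap, Set.ncard_image_of_injective _ Prod.swap_injective, Set.ncard_coe_finset,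
    Finset.card_product_filter_lt, Set.ncard_eq_toFinset_card S hS]

namespace FormalComm

variable {X : Type}

lemma one_le_weight (t : FormalComm X) : 1 ≤ t.weight := by
  induction t with
  | of => exact le_rfl
  | comm b a _ _ => simp only [weight]; omega

def foliage : FormalComm X → List X
  | of x => [x]
  | comm b a => foliage b ++ foliage a

lemma length_foliage (t : FormalComm X) : t.foliage.length = t.weight := by
  induction t with
  | of => rfl
  | comm b a ihb iha => simp [foliage, weight, ihb, iha]

lemma finite_setOf_weight_le [Finite X] (d : ℕ) :
    {t : FormalComm X | t.weight ≤ d}.Finite := by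
  induction d with
  | zero =>
    refine Set.finite_empty.subset fun t (ht : t.weight ≤ 0) => ?_
    have := one_le_weight t
    omega
  | succ d ih =>
    refine ((Set.finite_range of).union ((ih.prod ih).image (Function.uncurry comm))).subset ?_
    rintro (x | ⟨b, a⟩) h
    · exact .inl ⟨x, rfl⟩
    · have := one_le_weight a; have := one_le_weight b
      simp only [Set.mem_ofPred_eq, weight] at h
      exact .inr ⟨(b, a), ⟨show b.weight ≤ d by omega, show a.weight ≤ d by omega⟩, rfl⟩

lemma uncurry_comm_injective : Function.Injective (Function.uncurry (comm (X := X))) :=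
  fun _ _ h => Prod.ext (comm.inj h).1 (comm.inj h).2

def listFoliage (l : List (FormalComm X)) : List X := (l.map foliage).flatten

@[simp]
lemma listFoliage_cons (t : FormalComm X) (l : List (FormalComm X)) :
    listFoliage (t :: l) = t.foliage ++ listFoliage l := rfl

@[simp]
lemma listFoliage_append (l l' : List (FormalComm X)) :
    listFoliage (l ++ l') = listFoliage l ++ listFoliage l' := by
  simp [listFoliage]

lemma listFoliage_map_of (w : List X) : listFoliage (w.map of) = w := by
  induction w with
  | nil => rfl
  | cons x w ih => simp [foliage, ih]

lemma sum_map_weight (l : List (FormalComm X)) :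
    (l.map weight).sum = (listFoliage l).length := by
  induction l with
  | nil => rfl
  | cons t l ih => simp [length_foliage, ih]

variable [LinearOrder (FormalComm X)]

def WeightCompatible (X : Type) [LinearOrder (FormalComm X)] : Prop :=
  ∀ a b : FormalComm X, a.weight < b.weight → a < b

lemma left_lt_comm (hwt : WeightCompatible X)
    (b a : FormalComm X) : b < comm b a :=
  hwt _ _ (by simp only [weight]; have := one_le_weight a; omega)

lemma right_lt_comm (hwt : WeightCompatible X)
    (b a : FormalComm X) : a < comm b a :=
  hwt _ _ (by simp only [weight]; have := one_le_weight b; omega)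

def RightFactorLE (t c : FormalComm X) : Prop := ∀ t₁ t₂, t = comm t₁ t₂ → t₂ ≤ c

inductive CollectStep : List (FormalComm X) → List (FormalComm X) → Prop
  | mk (p s : List (FormalComm X)) (b a : FormalComm X) :
      a < b → (∀ c ∈ s, a ≤ c) → RightFactorLE b a →
      CollectStep (p ++ b :: a :: s) (p ++ comm b a :: s)

namespace CollectStep

variable {l l' : List (FormalComm X)}

lemma append_left (q : List (FormalComm X)) (h : CollectStep l l') :
    CollectStep (q ++ l) (q ++ l') := by
  obtain ⟨p, s, b, a, hab, hs, hb⟩ := h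
  simpa using mk (q ++ p) s b a hab hs hb

lemma length_lt (h : CollectStep l l') : l'.length < l.length := by
  obtain ⟨p, s, b, a, -, -, -⟩ := h
  simp

lemma listFoliage_eq (h : CollectStep l l') : listFoliage l' = listFoliage l := by
  obtain ⟨p, s, b, a, -, -, -⟩ := h
  simp [foliage]

lemma forall_isBasic (h : CollectStep l l') (hl : ∀ t ∈ l, IsBasic (· < ·) t) :
    ∀ t ∈ l', IsBasic (· < ·) t := by
  obtain ⟨p, s, b, a, hab, -, hb⟩ := h
  simp only [List.mem_append, List.mem_cons] at hl ⊢
  rintro t (ht | rfl | ht)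
  · exact hl t (.inl ht)
  · exact .comm b a (hl b (by simp)) (hl a (by simp)) hab
      fun b₁ b₂ hb' => not_lt.mpr (hb b₁ b₂ hb')
  · exact hl t (by simp [ht])

lemma pairwise_rightFactorLE (hwt : WeightCompatible X)
    (h : CollectStep l l') (hl : l.Pairwise RightFactorLE) : l'.Pairwise RightFactorLE := by
  obtain ⟨p, s, b, a, -, hs, -⟩ := h
  simp only [List.pairwise_append, List.pairwise_cons, List.mem_cons] at hl ⊢
  obtain ⟨hp, ⟨-, -, hs'⟩, hps⟩ := hl
  refine ⟨hp, ⟨fun c hc t₁ t₂ h => ?_, hs'⟩, fun x hx c hc => ?_⟩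
  · cases h
    exact hs c hc
  · rcases hc with rfl | hc
    · exact fun x₁ x₂ h => (hps x hx b (.inl rfl) x₁ x₂ h).trans (left_lt_comm hwt b a).le
    · exact hps x hx c (.inr (.inr hc))

lemma not_of_pairwise_le (hl : l.Pairwise (· ≤ ·)) : ¬ CollectStep l l' := by
  rintro ⟨p, s, b, a, hab, -, -⟩
  simp only [List.pairwise_append, List.pairwise_cons, List.mem_cons] at hl
  exact hab.not_ge (hl.2.1.1 a (.inl rfl))

-- Two redexes cannot share a single letter, so they either coincide or commute.
lemma diamond_of_append_eq (hwt : WeightCompatible X)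
    {p q s₁ s₂ : List (FormalComm X)} {b₁ a₁ b₂ a₂ : FormalComm X}
    (h : b₁ :: a₁ :: s₁ = q ++ b₂ :: a₂ :: s₂)
    (hab₁ : a₁ < b₁) (hs₁ : ∀ c ∈ s₁, a₁ ≤ c) (hb₁ : RightFactorLE b₁ a₁)
    (hab₂ : a₂ < b₂) (hs₂ : ∀ c ∈ s₂, a₂ ≤ c) (hb₂ : RightFactorLE b₂ a₂) :
    p ++ comm b₁ a₁ :: s₁ = p ++ q ++ comm b₂ a₂ :: s₂ ∨
      ∃ w, CollectStep (p ++ comm b₁ a₁ :: s₁) w ∧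
        CollectStep (p ++ q ++ comm b₂ a₂ :: s₂) w := by
  match q, h with
  | [], h =>
    obtain ⟨rfl, rfl, rfl⟩ : b₁ = b₂ ∧ a₁ = a₂ ∧ s₁ = s₂ := by simpa using h
    simp
  | [_], h =>
    obtain ⟨-, rfl, rfl⟩ : _ ∧ a₁ = b₂ ∧ s₁ = a₂ :: s₂ := by simpa using h
    exact absurd (hs₁ a₂ (by simp)) hab₂.not_ge
  | e :: f :: q', h =>
    obtain ⟨rfl, rfl, rfl⟩ : b₁ = e ∧ a₁ = f ∧ s₁ = q' ++ b₂ :: a₂ :: s₂ := by simpa using h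
    refine .inr ⟨p ++ comm b₁ a₁ :: (q' ++ comm b₂ a₂ :: s₂), ?_, ?_⟩
    · simpa using mk (p ++ comm b₁ a₁ :: q') s₂ b₂ a₂ hab₂ hs₂ hb₂
    · have hs : ∀ c ∈ q' ++ comm b₂ a₂ :: s₂, a₁ ≤ c := by
        simp only [List.mem_append, List.mem_cons] at hs₁ ⊢
        rintro c (hc | rfl | hc)
        · exact hs₁ c (.inl hc)
        · exact (hs₁ b₂ (by simp)).trans (left_lt_comm hwt b₂ a₂).le
        · exact hs₁ c (by simp [hc])
      simpa using mk p (q' ++ comm b₂ a₂ :: s₂) b₁ a₁ hab₁ hs hb₁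

lemma diamond (hwt : WeightCompatible X)
    {l u v : List (FormalComm X)} (hu : CollectStep l u) (hv : CollectStep l v) :
    u = v ∨ ∃ w, CollectStep u w ∧ CollectStep v w := by
  obtain ⟨p₁, s₁, b₁, a₁, hab₁, hs₁, hb₁⟩ := hu
  generalize hl : p₁ ++ b₁ :: a₁ :: s₁ = l at hv
  obtain ⟨p₂, s₂, b₂, a₂, hab₂, hs₂, hb₂⟩ := hv
  rcases List.append_eq_append_iff.mp hl with ⟨q, rfl, hq⟩ | ⟨q, rfl, hq⟩
  · exact diamond_of_append_eq hwt hq hab₁ hs₁ hb₁ hab₂ hs₂ hb₂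
  · exact (diamond_of_append_eq hwt hq hab₂ hs₂ hb₂ hab₁ hs₁ hb₁).imp Eq.symm
      fun ⟨w, h₁, h₂⟩ => ⟨w, h₂, h₁⟩

end CollectStep

lemma reflTransGen_collectStep_append_left {l l' : List (FormalComm X)} (q : List (FormalComm X))
    (h : ReflTransGen CollectStep l l') : ReflTransGen CollectStep (q ++ l) (q ++ l') :=
  h.lift (q ++ ·) fun _ _ => CollectStep.append_left q

lemma exists_reflTransGen_collectStep_normal (l : List (FormalComm X)) :
    ∃ l', ReflTransGen CollectStep l l' ∧ ∀ u, ¬ CollectStep l' u := by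
  obtain ⟨l', hl', hmin⟩ :=
    (measure List.length).wf.has_min {u | ReflTransGen CollectStep l u} ⟨l, .refl⟩
  exact ⟨l', hl', fun u hu => hmin u (hl'.tail hu) hu.length_lt⟩

lemma eq_of_reflTransGen_collectStep_normal (hwt : WeightCompatible X)
    {l u v : List (FormalComm X)} (hu : ReflTransGen CollectStep l u)
    (hv : ReflTransGen CollectStep l v) (hu' : ∀ w, ¬ CollectStep u w)
    (hv' : ∀ w, ¬ CollectStep v w) : u = v := by
  have hjoin := church_rosser (fun _ b c hb hc => ?_) hu hv
  · obtain ⟨w, huw, hvw⟩ := hjoin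
    rw [huw.cases_head.resolve_right fun ⟨c, h, _⟩ => hu' c h,
      hvw.cases_head.resolve_right fun ⟨c, h, _⟩ => hv' c h]
  · rcases CollectStep.diamond hwt hb hc with rfl | ⟨w, hbw, hcw⟩
    · exact ⟨b, .refl, .refl⟩
    · exact ⟨w, .single hbw, .single hcw⟩

lemma reflTransGen_collectStep_invariants
    (hwt : WeightCompatible X) {l l' : List (FormalComm X)}
    (h : ReflTransGen CollectStep l l') (hb : ∀ t ∈ l, IsBasic (· < ·) t)
    (hr : l.Pairwise RightFactorLE) :
    (∀ t ∈ l', IsBasic (· < ·) t) ∧ l'.Pairwise RightFactorLE ∧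
      listFoliage l' = listFoliage l := by
  induction h with
  | refl => exact ⟨hb, hr, rfl⟩
  | tail _ hs ih =>
    exact ⟨hs.forall_isBasic ih.1, hs.pairwise_rightFactorLE hwt ih.2.1,
      hs.listFoliage_eq.trans ih.2.2⟩

lemma pairwise_le_of_collectStep_normal {l : List (FormalComm X)}
    (hl : l.Pairwise RightFactorLE) (hn : ∀ u, ¬ CollectStep l u) : l.Pairwise (· ≤ ·) := by
  induction l with
  | nil => exact .nil
  | cons t l ih =>
    have hsorted := ih (List.pairwise_cons.mp hl).2 fun u hu =>
      hn _ (by simpa using hu.append_left [t])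
    refine List.pairwise_cons.mpr ⟨?_, hsorted⟩
    rcases l with _ | ⟨a, s⟩
    · simp
    have has : ∀ c ∈ s, a ≤ c := (List.pairwise_cons.mp hsorted).1
    have hta : t ≤ a := not_lt.mp fun hat =>
      hn _ (CollectStep.mk [] s t a hat has ((List.pairwise_cons.mp hl).1 a (by simp)))
    simp only [List.mem_cons]
    rintro c (rfl | hc)
    exacts [hta, hta.trans (has c hc)]

lemma reflTransGen_collectStep_foliage_append
    (hwt : WeightCompatible X) {t : FormalComm X}
    (ht : IsBasic (· < ·) t) (S : List (FormalComm X)) (hS : ∀ c ∈ S, RightFactorLE t c) :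
    ReflTransGen CollectStep (t.foliage.map of ++ S) (t :: S) := by
  induction ht generalizing S with
  | of x => exact .refl
  | comm b a _ _ hab hba ihb iha =>
    have haS : ∀ c ∈ S, a ≤ c := fun c hc => hS c hc b a rfl
    have hba : RightFactorLE b a := fun b₁ b₂ h => not_lt.mp (hba b₁ b₂ h)
    have hfa : ReflTransGen CollectStep (a.foliage.map of ++ S) (a :: S) :=
      iha S fun c hc a₁ a₂ h => (h ▸ right_lt_comm hwt a₁ a₂).le.trans (haS c hc)
    have hfb : ReflTransGen CollectStep (b.foliage.map of ++ a :: S) (b :: a :: S) := by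
      refine ihb _ fun c hc b₁ b₂ h => ?_
      rcases List.mem_cons.mp hc with rfl | hc
      exacts [hba b₁ b₂ h, (hba b₁ b₂ h).trans (haS c hc)]
    simpa [foliage] using ((reflTransGen_collectStep_append_left _ hfa).trans hfb).tail
      (CollectStep.mk [] S b a hab haS hba)

def IsBasicSeq (l : List (FormalComm X)) : Prop :=
  l.Pairwise (· ≤ ·) ∧ ∀ t ∈ l, IsBasic (· < ·) t

lemma IsBasicSeq.reflTransGen_collectStep
    (hwt : WeightCompatible X) {l : List (FormalComm X)}
    (hl : IsBasicSeq l) : ReflTransGen CollectStep ((listFoliage l).map of) l := by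
  induction l with
  | nil => exact .refl
  | cons t l ih =>
    obtain ⟨hsorted, hbasic⟩ := hl
    rw [List.pairwise_cons] at hsorted
    have hl : IsBasicSeq l := ⟨hsorted.2, fun u hu => hbasic u (by simp [hu])⟩
    simpa using (reflTransGen_collectStep_append_left _ (ih hl)).trans
      (reflTransGen_collectStep_foliage_append hwt (hbasic t (by simp)) l
        fun c hc t₁ t₂ h => (h ▸ right_lt_comm hwt t₁ t₂).le.trans (hsorted.1 c hc))

theorem existsUnique_isBasicSeq_listFoliage_eq
    (hwt : WeightCompatible X) (w : List X) :
    ∃! l : List (FormalComm X), IsBasicSeq l ∧ listFoliage l = w := by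
  obtain ⟨l, hred, hnormal⟩ := exists_reflTransGen_collectStep_normal (w.map of)
  obtain ⟨hbasic, hright, hword⟩ := reflTransGen_collectStep_invariants hwt hred
    (by simp [IsBasic.of])
    (List.pairwise_map.mpr (List.pairwise_of_forall_sublist fun _ _ _ h => nomatch h))
  have hl : IsBasicSeq l := ⟨pairwise_le_of_collectStep_normal hright hnormal, hbasic⟩
  rw [listFoliage_map_of] at hword
  refine ⟨l, ⟨hl, hword⟩, fun l' ⟨hl', hw'⟩ => ?_⟩
  exact eq_of_reflTransGen_collectStep_normal hwt (hw' ▸ hl'.reflTransGen_collectStep hwt) hred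
    (fun _ => CollectStep.not_of_pairwise_le hl'.1) hnormal

theorem ncard_multisetsOfWeight_isBasic [Fintype X]
    (hwt : WeightCompatible X) (n : ℕ) :
    (multisetsOfWeight weight {t : FormalComm X | IsBasic (· < ·) t} n).ncard =
      Fintype.card X ^ n := by
  have hseq : ∀ M : Multiset (FormalComm X), (∀ t ∈ M, IsBasic (· < ·) t) →
      IsBasicSeq (M.sort (· ≤ ·)) :=
    fun M hM => ⟨M.pairwise_sort _, fun t ht => hM t ((M.mem_sort _).mp ht)⟩
  have hlength : ∀ M : Multiset (FormalComm X),
      (listFoliage (M.sort (· ≤ ·))).length = (M.map weight).sum := fun M => by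
    conv_rhs => rw [← M.sort_eq (· ≤ ·)]
    rw [Multiset.map_coe, Multiset.sum_coe, sum_map_weight]
  have hwords : {w : List X | w.length = n}.ncard = Fintype.card X ^ n := by
    rw [← Nat.card_coe_set_eq]
    exact (Nat.card_eq_fintype_card (α := List.Vector X n)).trans (card_vector n)
  rw [← hwords]
  refine Set.ncard_congr (fun M _ => listFoliage (M.sort (· ≤ ·))) ?_ ?_ ?_
  · rintro M ⟨-, hsum⟩
    exact (hlength M).trans hsum
  · rintro M N ⟨hM, -⟩ ⟨hN, -⟩ h
    rw [← M.sort_eq (· ≤ ·), ← N.sort_eq (· ≤ ·),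
      (existsUnique_isBasicSeq_listFoliage_eq hwt _).unique ⟨hseq M hM, h⟩ ⟨hseq N hN, rfl⟩]
  · rintro w (hw : w.length = n)
    obtain ⟨l, ⟨hsorted, hbasic⟩, rfl⟩ := (existsUnique_isBasicSeq_listFoliage_eq hwt w).exists
    have hsort : (l : Multiset (FormalComm X)).sort (· ≤ ·) = l :=
      List.mergeSort_eq_self _ hsorted
    refine ⟨l, ⟨hbasic, ?_⟩, by rw [hsort]⟩
    rw [← hw, ← hlength, hsort]

theorem ncard_isBasic_weight_eq_witt [Fintype X]
    (hwt : WeightCompatible X) {d : ℕ} (hd : 0 < d) :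
    {t : FormalComm X | IsBasic (· < ·) t ∧ t.weight = d}.ncard = witt d (Fintype.card X) := by
  have hfin : ∀ n, {t ∈ {t : FormalComm X | IsBasic (· < ·) t} | t.weight ≤ n}.Finite :=
    fun n => (finite_setOf_weight_le n).subset fun t ht => ht.2
  refine eq_witt_of_sum_divisors_mul_eq_pow
    (h := fun d => {t : FormalComm X | IsBasic (· < ·) t ∧ t.weight = d}.ncard) (fun n hn => ?_) hd
  refine eq_pow_of_mul_pow_eq_sum (c := fun e => ∑ d ∈ e.divisors,
    d * {t : FormalComm X | IsBasic (· < ·) t ∧ t.weight = d}.ncard) (fun n => ?_) hn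
  have := mul_ncard_multisetsOfWeight one_le_weight hfin n
  simp only [ncard_multisetsOfWeight_isBasic hwt] at this
  exact this

def basicOfWeightIn (s : Finset ℕ) : Set (FormalComm X) :=
  {t | IsBasic (· < ·) t ∧ t.weight ∈ s}

lemma finite_basicOfWeightIn [Finite X] (s : Finset ℕ) :
    (basicOfWeightIn s : Set (FormalComm X)).Finite :=
  (finite_setOf_weight_le (s.sup id)).subset fun _ ht => Finset.le_sup (f := id) ht.2

theorem ncard_basicOfWeightIn [Fintype X]
    (hwt : WeightCompatible X) {s : Finset ℕ} (hs : 0 ∉ s) :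
    (basicOfWeightIn s : Set (FormalComm X)).ncard = ∑ i ∈ s, witt i (Fintype.card X) := by
  induction s using Finset.induction_on with
  | empty => simp [basicOfWeightIn]
  | insert i s hi ih =>
    rw [Finset.mem_insert, not_or] at hs
    have hunion : basicOfWeightIn (insert i s) =
        {t : FormalComm X | IsBasic (· < ·) t ∧ t.weight = i} ∪ basicOfWeightIn s := by
      ext t
      simp only [basicOfWeightIn, Finset.mem_insert, Set.mem_union, Set.mem_ofPred_eq]
      tauto
    have hdisj : Disjoint {t : FormalComm X | IsBasic (· < ·) t ∧ t.weight = i}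
        (basicOfWeightIn s) :=
      Set.disjoint_left.mpr fun _ ht ht' => hi (ht.2 ▸ ht'.2)
    rw [hunion, Set.ncard_union_eq hdisj
      ((finite_setOf_weight_le i).subset fun _ ht => ht.2.le) (finite_basicOfWeightIn s),
      ncard_isBasic_weight_eq_witt hwt (Nat.pos_of_ne_zero (Ne.symm hs.1)), ih hs.2,
      Finset.sum_insert hi]

def basicCommSet (P : ℕ → ℕ → Prop) : Set (FormalComm X) :=
  {p | ∃ β α, p = comm β α ∧ IsBasic (· < ·) β ∧ IsBasic (· < ·) α ∧ α < β ∧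
    P β.weight α.weight}

lemma basicCommSet_congr {P Q : ℕ → ℕ → Prop} (h : ∀ b a, P b a ↔ Q b a) :
    (basicCommSet P : Set (FormalComm X)) = basicCommSet Q := by
  simp only [basicCommSet, h]

lemma basicCommSet_diff (P Q : ℕ → ℕ → Prop) :
    (basicCommSet P \ basicCommSet Q : Set (FormalComm X)) =
      basicCommSet fun b a => P b a ∧ ¬ Q b a := by
  ext p
  constructor
  · rintro ⟨⟨β, α, rfl, hβ, hα, hαβ, hP⟩, hQ⟩
    exact ⟨β, α, rfl, hβ, hα, hαβ, hP, fun hQ' => hQ ⟨β, α, rfl, hβ, hα, hαβ, hQ'⟩⟩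
  · rintro ⟨β, α, rfl, hβ, hα, hαβ, hP, hQ⟩
    refine ⟨⟨β, α, rfl, hβ, hα, hαβ, hP⟩, ?_⟩
    rintro ⟨β', α', h, -, -, -, hQ'⟩
    obtain ⟨rfl, rfl⟩ := comm.inj h
    exact hQ hQ'

lemma ncard_basicCommSet_or {P Q : ℕ → ℕ → Prop}
    (hP : (basicCommSet P : Set (FormalComm X)).Finite)
    (hQ : (basicCommSet Q : Set (FormalComm X)).Finite) (hPQ : ∀ b a, P b a → ¬ Q b a) :
    (basicCommSet (fun b a => P b a ∨ Q b a) : Set (FormalComm X)).ncard =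
      (basicCommSet P : Set (FormalComm X)).ncard +
        (basicCommSet Q : Set (FormalComm X)).ncard := by
  have hunion : (basicCommSet (fun b a => P b a ∨ Q b a) : Set (FormalComm X)) =
      basicCommSet P ∪ basicCommSet Q := by
    ext p
    simp only [basicCommSet, Set.mem_union, Set.mem_ofPred_eq, and_or_left, exists_or]
  refine hunion ▸ Set.ncard_union_eq (Set.disjoint_left.mpr ?_) hP hQ
  rintro _ ⟨β, α, rfl, -, -, -, hP⟩ ⟨β', α', h, -, -, -, hQ⟩
  obtain ⟨rfl, rfl⟩ := comm.inj h
  exact hPQ _ _ hP hQ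

lemma basicCommSet_mem_eq_image (s t : Finset ℕ) :
    (basicCommSet fun b a => b ∈ s ∧ a ∈ t : Set (FormalComm X)) =
      Function.uncurry comm '' {q ∈ basicOfWeightIn s ×ˢ basicOfWeightIn t | q.2 < q.1} := by
  ext p
  constructor
  · rintro ⟨β, α, rfl, hβ, hα, hαβ, hs, ht⟩
    exact ⟨(β, α), ⟨⟨⟨hβ, hs⟩, hα, ht⟩, hαβ⟩, rfl⟩
  · rintro ⟨⟨β, α⟩, ⟨⟨⟨hβ, hs⟩, hα, ht⟩, hαβ⟩, rfl⟩
    exact ⟨β, α, rfl, hβ, hα, hαβ, hs, ht⟩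

lemma finite_basicCommSet_mem [Finite X] (s t : Finset ℕ) :
    (basicCommSet fun b a => b ∈ s ∧ a ∈ t : Set (FormalComm X)).Finite :=
  basicCommSet_mem_eq_image (X := X) s t ▸
    (((finite_basicOfWeightIn s).prod (finite_basicOfWeightIn t)).subset fun _ hq => hq.1).image _

theorem ncard_basicCommSet_mem_of_lt [Fintype X]
    (hwt : WeightCompatible X) {s t : Finset ℕ}
    (hs : 0 ∉ s) (ht : 0 ∉ t) (hst : ∀ b ∈ s, ∀ a ∈ t, a < b) :
    (basicCommSet fun b a => b ∈ s ∧ a ∈ t : Set (FormalComm X)).ncard =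
      (∑ i ∈ s, witt i (Fintype.card X)) * ∑ i ∈ t, witt i (Fintype.card X) := by
  have hprod : {q ∈ (basicOfWeightIn s ×ˢ basicOfWeightIn t : Set (FormalComm X × FormalComm X)) |
      q.2 < q.1} = basicOfWeightIn s ×ˢ basicOfWeightIn t :=
    Set.sep_eq_self_iff_mem_true.mpr fun q hq => hwt _ _ (hst _ hq.1.2 _ hq.2.2)
  rw [basicCommSet_mem_eq_image, Set.ncard_image_of_injective _ uncurry_comm_injective, hprod,
    Set.ncard_prod, ncard_basicOfWeightIn hwt hs, ncard_basicOfWeightIn hwt ht]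

theorem ncard_basicCommSet_mem_self [Fintype X]
    (hwt : WeightCompatible X) {s : Finset ℕ} (hs : 0 ∉ s) :
    (basicCommSet fun b a => b ∈ s ∧ a ∈ s : Set (FormalComm X)).ncard =
      witt 2 (∑ i ∈ s, witt i (Fintype.card X)) := by
  rw [basicCommSet_mem_eq_image, Set.ncard_image_of_injective _ uncurry_comm_injective,
    ncard_setOf_snd_lt_fst (finite_basicOfWeightIn s), ncard_basicOfWeightIn hwt hs, witt_two]

end FormalComm

open FormalComm

theorem card_A_diff_C_general (m c₁ c₂ n : ℕ)
    (r : FormalComm (Fin m) → FormalComm (Fin m) → Prop)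
    (hr : IsStrictTotalOrder (FormalComm (Fin m)) r)
    (hwt : ∀ a b : FormalComm (Fin m), a.weight < b.weight → r a b)
    (hc : c₂ ≤ c₁) :
    let A : Set (FormalComm (Fin m)) := {p | ∃ β α : FormalComm (Fin m),
      p = .comm β α ∧ FormalComm.IsBasic r β ∧ FormalComm.IsBasic r α ∧ r α β ∧
      c₁ + 1 ≤ β.weight ∧ β.weight ≤ c₁ + n ∧ c₂ + 1 ≤ α.weight ∧ α.weight ≤ c₂ + n}
    let C : Set (FormalComm (Fin m)) := {p | ∃ β α : FormalComm (Fin m),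
      p = .comm β α ∧ FormalComm.IsBasic r β ∧ FormalComm.IsBasic r α ∧ r α β ∧
      c₂ + n + 1 ≤ β.weight ∧ c₁ + 1 ≤ α.weight ∧
      β.weight + α.weight ≤ 2 * n + c₁ + c₂ + 1}
    (c₂ + n < c₁ + 1 →
      (A \ C).ncard = (∑ i ∈ Finset.Icc (c₁ + 1) (c₁ + n), witt i m) *
        (∑ i ∈ Finset.Icc (c₂ + 1) (c₂ + n), witt i m)) ∧
    (c₁ + 1 ≤ c₂ + n →
      (A \ C).ncard = (∑ i ∈ Finset.Icc (c₁ + 1) (c₁ + n), witt i m) *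
          (∑ i ∈ Finset.Icc (c₂ + 1) c₁, witt i m) +
        witt 2 (∑ i ∈ Finset.Icc (c₁ + 1) (c₂ + n), witt i m)) := by
  classical
  -- Now `<` is `r`, so `A` and `C` are `basicCommSet`s up to `rfl`.
  let _ : LinearOrder (FormalComm (Fin m)) := linearOrderOfSTO r
  have hwt' : WeightCompatible (Fin m) := hwt
  have hIcc : ∀ a b, 0 ∉ Icc (a + 1) b := by simp
  intro A C
  have hA : A = basicCommSet fun b a => c₁ + 1 ≤ b ∧ b ≤ c₁ + n ∧ c₂ + 1 ≤ a ∧ a ≤ c₂ + n := rfl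
  have hC : C = basicCommSet fun b a =>
      c₂ + n + 1 ≤ b ∧ c₁ + 1 ≤ a ∧ b + a ≤ 2 * n + c₁ + c₂ + 1 := rfl
  rw [hA, hC, basicCommSet_diff]
  constructor
  · intro h
    rw [basicCommSet_congr (Q := fun b a => b ∈ Icc (c₁ + 1) (c₁ + n) ∧ a ∈ Icc (c₂ + 1) (c₂ + n))
      (by intro b a; simp only [mem_Icc]; omega),
      ncard_basicCommSet_mem_of_lt hwt' (hIcc _ _) (hIcc _ _) (by simp only [mem_Icc]; omega),
      Fintype.card_fin]
  · intro h
    rw [basicCommSet_congr (Q := fun b a => (b ∈ Icc (c₁ + 1) (c₁ + n) ∧ a ∈ Icc (c₂ + 1) c₁) ∨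
        (b ∈ Icc (c₁ + 1) (c₂ + n) ∧ a ∈ Icc (c₁ + 1) (c₂ + n)))
      (by intro b a; simp only [mem_Icc]; omega),
      ncard_basicCommSet_or (finite_basicCommSet_mem _ _) (finite_basicCommSet_mem _ _)
        (by simp only [mem_Icc]; omega),
      ncard_basicCommSet_mem_of_lt hwt' (hIcc _ _) (hIcc _ _) (by simp only [mem_Icc]; omega),
      ncard_basicCommSet_mem_self hwt' (hIcc _ _), Fintype.card_fin]

/-- Corollary 2.5: if `c₁ ≥ c₂` and `c₂ + n < c₁ + 1`, then
`|A \ C| = (∑_{i=c₁+1}^{c₁+n} χ_i(m))(∑_{i=c₂+1}^{c₂+n} χ_i(m))`; and if `c₂ + n ≥ c₁ + 1`,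
then `|A \ C| = (∑_{i=c₁+1}^{c₁+n} χ_i(m))(∑_{i=c₂+1}^{c₁} χ_i(m)) + χ₂(∑_{i=c₁+1}^{c₂+n} χ_i(m))`. -/
theorem card_A_diff_C (m c₁ c₂ n : ℕ)
    (r : FormalComm (Fin m) → FormalComm (Fin m) → Prop)
    (hr : IsStrictTotalOrder (FormalComm (Fin m)) r)
    (hwt : ∀ a b : FormalComm (Fin m), a.weight < b.weight → r a b)
    (hc : c₂ ≤ c₁) (hc₂ : 1 ≤ c₂) (hn : 1 ≤ n)
    (hineq : n + c₁ ≤ 2 * c₂ + 1) :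
    let A : Set (FormalComm (Fin m)) := {p | ∃ β α : FormalComm (Fin m),
      p = .comm β α ∧ FormalComm.IsBasic r β ∧ FormalComm.IsBasic r α ∧ r α β ∧
      c₁ + 1 ≤ β.weight ∧ β.weight ≤ c₁ + n ∧ c₂ + 1 ≤ α.weight ∧ α.weight ≤ c₂ + n}
    let C : Set (FormalComm (Fin m)) := {p | ∃ β α : FormalComm (Fin m),
      p = .comm β α ∧ FormalComm.IsBasic r β ∧ FormalComm.IsBasic r α ∧ r α β ∧
      c₂ + n + 1 ≤ β.weight ∧ c₁ + 1 ≤ α.weight ∧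
      β.weight + α.weight ≤ 2 * n + c₁ + c₂ + 1}
    (c₂ + n < c₁ + 1 →
      (A \ C).ncard = (∑ i ∈ Finset.Icc (c₁ + 1) (c₁ + n), witt i m) *
        (∑ i ∈ Finset.Icc (c₂ + 1) (c₂ + n), witt i m)) ∧
    (c₁ + 1 ≤ c₂ + n →
      (A \ C).ncard = (∑ i ∈ Finset.Icc (c₁ + 1) (c₁ + n), witt i m) *
          (∑ i ∈ Finset.Icc (c₂ + 1) c₁, witt i m) +
        witt 2 (∑ i ∈ Finset.Icc (c₁ + 1) (c₂ + n), witt i m)) :=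
  card_A_diff_C_general m c₁ c₂ n r hr hwt hc
end
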